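/- arXiv:1906.05222 — 6 statements merged into one kernel-verified Lean document; each statement's English description precedes it below -/
import Mathlib

section
/- Fix λ₀ ∈ ℂ∖{0,1,−1} and set t₀ = λ₀ + λ₀⁻¹ (so t₀ ∉ {2,−2}), and let D_{λ₀} denote the matrix [[λ₀,0],[0,λ₀⁻¹]]. Then the map Φ : SL₂(ℂ) → ℂ⁴ defined by Φ(A) = (A₁₂, A₂₁, tr A, tr(A·D_{λ₀})) is injective, and its image is exactly the quadric hypersurface W := {(y,z,t,t') ∈ ℂ⁴ : (t−t')²/(t₀²−4) − t t'/(t₀+2) + y z = −1}. -/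
open Matrix

/-- The map `Φ(A) = (A₁₂, A₂₁, tr A, tr (A · D_{λ₀}))` on 2×2 complex matrices,
where `D_{λ₀} = [[λ₀, 0], [0, λ₀⁻¹]]`. -/
noncomputable def Phi (lam0 : ℂ) (A : Matrix (Fin 2) (Fin 2) ℂ) : ℂ × ℂ × ℂ × ℂ :=
  (A 0 1, A 1 0, A.trace, (A * !![lam0, 0; 0, lam0⁻¹]).trace)

lemma key_id (l m a d : ℂ) (hm : l * m = 1) (h4 : (l + m) ^ 2 - 4 ≠ 0)
    (h2 : l + m + 2 ≠ 0) :
    ((a + d) - (a * l + d * m)) ^ 2 / ((l + m) ^ 2 - 4)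
      - (a + d) * (a * l + d * m) / (l + m + 2) = -(a * d) := by
  rw [div_sub_div _ _ h4 h2, div_eq_iff (mul_ne_zero h4 h2)]
  linear_combination (-(a - d) ^ 2 * (l + m + 2)) * hm

theorem stmt2 (lam0 : ℂ) (h0 : lam0 ≠ 0) (h1 : lam0 ≠ 1) (hm1 : lam0 ≠ -1)
    (t0 : ℂ) (ht0 : t0 = lam0 + lam0⁻¹) :
    Set.InjOn (Phi lam0) {A : Matrix (Fin 2) (Fin 2) ℂ | A.det = 1} ∧
    Phi lam0 '' {A : Matrix (Fin 2) (Fin 2) ℂ | A.det = 1} =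
      {p : ℂ × ℂ × ℂ × ℂ |
        (p.2.2.1 - p.2.2.2) ^ 2 / (t0 ^ 2 - 4) - p.2.2.1 * p.2.2.2 / (t0 + 2)
          + p.1 * p.2.1 = -1} := by
  have hp1 : lam0 + 1 ≠ 0 := fun h => hm1 (by linear_combination h)
  have hq1 : lam0 - 1 ≠ 0 := sub_ne_zero.mpr h1
  have hsq : lam0 ^ 2 - 1 ≠ 0 := by
    intro h
    apply hp1
    rcases mul_eq_zero.mp (show (lam0 - 1) * (lam0 + 1) = 0 by linear_combination h) with h' | h'
    · exact absurd h' hq1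
    · exact h'
  have h2 : t0 + 2 ≠ 0 := by
    rw [ht0]
    have : lam0 + lam0⁻¹ + 2 = (lam0 + 1) ^ 2 / lam0 := by field_simp; ring
    rw [this]
    exact div_ne_zero (pow_ne_zero _ hp1) h0
  have hm2 : t0 - 2 ≠ 0 := by
    rw [ht0]
    have : lam0 + lam0⁻¹ - 2 = (lam0 - 1) ^ 2 / lam0 := by field_simp; ring
    rw [this]
    exact div_ne_zero (pow_ne_zero _ hq1) h0
  have h4 : t0 ^ 2 - 4 ≠ 0 := by
    intro h
    rcases mul_eq_zero.mp (show (t0 - 2) * (t0 + 2) = 0 by linear_combination h) with h' | h'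
    exacts [hm2 h', h2 h']
  have hdiff : lam0 - lam0⁻¹ ≠ 0 := by
    intro h
    apply hsq
    have : (lam0 - lam0⁻¹) * lam0 = 0 := by rw [h]; ring
    have h' : lam0 ^ 2 - 1 = (lam0 - lam0⁻¹) * lam0 := by field_simp
    rw [h', this]
  have htr : ∀ A : Matrix (Fin 2) (Fin 2) ℂ,
      (A * !![lam0, 0; 0, lam0⁻¹]).trace = A 0 0 * lam0 + A 1 1 * lam0⁻¹ := by
    intro A
    simp [Matrix.trace_fin_two, Matrix.mul_apply, Fin.sum_univ_two]
  constructor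
  · intro A hA B hB hAB
    simp only [Phi, Prod.mk.injEq, htr] at hAB
    obtain ⟨e1, e2, e3, e4⟩ := hAB
    rw [Matrix.trace_fin_two, Matrix.trace_fin_two] at e3
    have e5 : (A 0 0 - B 0 0) * (lam0 - lam0⁻¹) = 0 := by
      linear_combination e4 - lam0⁻¹ * e3
    have e00 : A 0 0 = B 0 0 := by
      rcases mul_eq_zero.mp e5 with h | h
      · exact sub_eq_zero.mp h
      · exact absurd h hdiff
    have e11 : A 1 1 = B 1 1 := by
      linear_combination e3 - e00
    ext i j
    fin_cases i <;> fin_cases j <;> assumption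
  · ext p
    simp only [Set.mem_image, Set.mem_setOf_eq]
    constructor
    · rintro ⟨A, hA, rfl⟩
      simp only [Phi, htr, Matrix.trace_fin_two]
      have hdet : A 0 0 * A 1 1 - A 0 1 * A 1 0 = 1 := by
        rw [Matrix.det_fin_two] at hA; linear_combination hA
      have key := key_id lam0 lam0⁻¹ (A 0 0) (A 1 1) (mul_inv_cancel₀ h0)
        (by rw [← ht0]; exact h4) (by rw [← ht0]; exact h2)
      rw [← ht0] at key
      linear_combination key - hdet
    · rintro hp
      set y := p.1 with hy
      set z := p.2.1 with hz
      set t := p.2.2.1 with htt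
      set t' := p.2.2.2 with htt'
      obtain ⟨a, ha⟩ : ∃ a : ℂ, a = (lam0 * t' - t) / (lam0 ^ 2 - 1) := ⟨_, rfl⟩
      obtain ⟨d, hd⟩ : ∃ d : ℂ, d = t - a := ⟨_, rfl⟩
      have hsum : a + d = t := by rw [hd]; ring
      have ht'' : a * lam0 + d * lam0⁻¹ = t' := by
        rw [hd, ha]
        field_simp
        ring
      have key := key_id lam0 lam0⁻¹ a d (mul_inv_cancel₀ h0)
        (by rw [← ht0]; exact h4) (by rw [← ht0]; exact h2)
      rw [← ht0, hsum, ht''] at key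
      have hdet : a * d - y * z = 1 := by linear_combination key - hp
      refine ⟨!![a, y; z, d], ?_, ?_⟩
      · show Matrix.det _ = 1
        rw [Matrix.det_fin_two_of]
        linear_combination hdet
      · have e00 : (!![a, y; z, d] : Matrix (Fin 2) (Fin 2) ℂ) 0 0 = a := rfl
        have e01 : (!![a, y; z, d] : Matrix (Fin 2) (Fin 2) ℂ) 0 1 = y := rfl
        have e10 : (!![a, y; z, d] : Matrix (Fin 2) (Fin 2) ℂ) 1 0 = z := rfl
        have e11 : (!![a, y; z, d] : Matrix (Fin 2) (Fin 2) ℂ) 1 1 = d := rfl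
        simp only [Phi, htr, Matrix.trace_fin_two, e00, e01, e10, e11, hsum, ht'']
        rfl
end

section
/- Fix λ₀ ∈ ℂ∖{0,1,−1} and set t₀ = λ₀ + λ₀⁻¹. Then the map μ ↦ (μλ₀ + μ⁻¹λ₀⁻¹, μ + μ⁻¹) is a bijection from ℂ∖{0} onto the affine hyperbola H := {(t,t') ∈ ℂ² : (t−t')²/(t₀²−4) − t t'/(t₀+2) = −1}. -/
theorem stmt4 (lam0 : ℂ) (h0 : lam0 ≠ 0) (h1 : lam0 ≠ 1) (hm1 : lam0 ≠ -1)
    (t0 : ℂ) (ht0 : t0 = lam0 + lam0⁻¹) :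
    Set.BijOn (fun mu : ℂ => (mu * lam0 + mu⁻¹ * lam0⁻¹, mu + mu⁻¹))
      {mu : ℂ | mu ≠ 0}
      {p : ℂ × ℂ | (p.1 - p.2) ^ 2 / (t0 ^ 2 - 4) - p.1 * p.2 / (t0 + 2) = -1} := by
  subst ht0
  have h1' : lam0 - 1 ≠ 0 := sub_ne_zero.mpr h1
  have hm1' : lam0 + 1 ≠ 0 := by
    intro h; exact hm1 (by linear_combination h)
  have hd : lam0 - lam0⁻¹ ≠ 0 := by
    intro h
    have : lam0 * lam0 - 1 = 0 := by
      field_simp at h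
      linear_combination h
    have : (lam0 - 1) * (lam0 + 1) = 0 := by linear_combination this
    rcases mul_eq_zero.mp this with h' | h'
    · exact h1' h'
    · exact hm1' h'
  have ht2 : lam0 + lam0⁻¹ + 2 ≠ 0 := by
    intro h
    apply hm1'
    have : (lam0 + 1) ^ 2 = 0 := by
      field_simp at h
      linear_combination h
    exact pow_eq_zero_iff (n := 2) (by norm_num) |>.mp this
  have ht2' : lam0 + lam0⁻¹ - 2 ≠ 0 := by
    intro h
    apply h1'
    have : (lam0 - 1) ^ 2 = 0 := by
      field_simp at h
      linear_combination h
    exact pow_eq_zero_iff (n := 2) (by norm_num) |>.mp this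
  have ht4 : (lam0 + lam0⁻¹) ^ 2 - 4 ≠ 0 := by
    intro h
    have : (lam0 + lam0⁻¹ + 2) * (lam0 + lam0⁻¹ - 2) = 0 := by linear_combination h
    rcases mul_eq_zero.mp this with h' | h'
    · exact ht2 h'
    · exact ht2' h'
  refine ⟨?_, ?_, ?_⟩
  · intro mu hmu
    simp only [Set.mem_setOf_eq] at *
    rw [div_sub_div _ _ ht4 ht2, div_eq_iff (mul_ne_zero ht4 ht2)]
    have hmi : mu * mu⁻¹ = 1 := mul_inv_cancel₀ hmu
    have hli : lam0 * lam0⁻¹ = 1 := mul_inv_cancel₀ h0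
    linear_combination
      (4 + 2 * lam0⁻¹ - 2 * lam0⁻¹ ^ 2 - lam0⁻¹ ^ 3 + 2 * lam0 - lam0 * lam0⁻¹ ^ 2
        - 2 * lam0 ^ 2 - lam0 ^ 2 * lam0⁻¹ - lam0 ^ 3) * hmi +
      (4 + 2 * lam0⁻¹ + 2 * lam0 - 2 * mu⁻¹ ^ 2 - mu⁻¹ ^ 2 * lam0⁻¹ - mu⁻¹ ^ 2 * lam0
        - 2 * mu ^ 2 - mu ^ 2 * lam0⁻¹ - mu ^ 2 * lam0) * hli
  · intro a ha b hb hab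
    simp only [Set.mem_setOf_eq] at ha hb
    simp only [Prod.mk.injEq] at hab
    obtain ⟨e1, e2⟩ := hab
    have : a * (lam0 - lam0⁻¹) = b * (lam0 - lam0⁻¹) := by
      linear_combination e1 - lam0⁻¹ * e2
    exact mul_right_cancel₀ hd this
  · rintro ⟨t, t'⟩ hp
    simp only [Set.mem_setOf_eq] at hp
    rw [div_sub_div _ _ ht4 ht2, div_eq_iff (mul_ne_zero ht4 ht2)] at hp
    have hli : lam0 * lam0⁻¹ = 1 := mul_inv_cancel₀ h0
    have hp2 : t ^ 2 + t' ^ 2 - (lam0 + lam0⁻¹) * (t * t') = 4 - (lam0 + lam0⁻¹) ^ 2 :=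
      mul_left_cancel₀ ht2 (by linear_combination hp)
    have key : (t - lam0⁻¹ * t') * (lam0 * t' - t) = (lam0 - lam0⁻¹) ^ 2 := by
      linear_combination -hp2 + (4 - t' ^ 2) * hli
    set mu : ℂ := (t - lam0⁻¹ * t') / (lam0 - lam0⁻¹) with hmu
    have hA : t - lam0⁻¹ * t' ≠ 0 := by
      intro h
      rw [h, zero_mul] at key
      exact pow_ne_zero 2 hd key.symm
    have hmune : mu ≠ 0 := div_ne_zero hA hd
    have hinv : mu⁻¹ = (lam0 * t' - t) / (lam0 - lam0⁻¹) := by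
      apply inv_eq_of_mul_eq_one_right
      rw [hmu, div_mul_div_comm, key, sq]
      exact div_self (mul_ne_zero hd hd)
    refine ⟨mu, hmune, ?_⟩
    simp only [Prod.mk.injEq]
    constructor
    · rw [hinv, hmu, div_mul_eq_mul_div, div_mul_eq_mul_div, ← add_div,
        div_eq_iff hd]
      ring
    · rw [hinv, hmu, ← add_div, div_eq_iff hd]
      ring
end

section
/- Fix λ₀ ∈ ℂ∖{0,1,−1}, let D_{λ₀} = [[λ₀,0],[0,λ₀⁻¹]], and let ε ∈ {2,−2}. Then the map A ↦ A₂₁ is a bijection from the set {A ∈ SL₂(ℂ) : tr A = 2, A ≠ 1, tr(A·D_{λ₀}) = ε} onto ℂ∖{0}. (Explicitly, each such A equals [[1−x, −x²/z],[z, 1+x]] with x = (λ₀+λ₀⁻¹−ε)/(λ₀−λ₀⁻¹) ≠ 0 and z = A₂₁.) -/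
/-!
Write `D = diag(λ, λ⁻¹)`. The two trace conditions `a + d = 2` and `λ a + λ⁻¹ d = ε` are a
linear system in the diagonal entries of `A` with determinant `λ⁻¹ - λ ≠ 0`, so they force
`a = 1 - x` and `d = 1 + x`. Then `det A = 1` says exactly `b c = -x²`, and `x ≠ 0` because
`λ + λ⁻¹ ∓ 2 = (λ ∓ 1)² / λ`. Hence `c ≠ 0` and `b = -x² / c`, so `A` is determined by `c`,
and every `c ≠ 0` occurs.
-/

open Matrix

variable {K : Type*} [Field K]

lemma sub_inv_ne_zero_of_ne_one_of_ne_neg_one {l : K} (h0 : l ≠ 0) (h1 : l ≠ 1)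
    (hm1 : l ≠ -1) : l - l⁻¹ ≠ 0 := by
  have hl : l - l⁻¹ = (l - 1) * (l + 1) / l := by field_simp; ring
  rw [hl]
  exact div_ne_zero (mul_ne_zero (sub_ne_zero.2 h1) (by rwa [← sub_neg_eq_add, sub_ne_zero]))
    h0

lemma add_inv_sub_ne_zero_of_eq_two_or_eq_neg_two {l ε : K} (h0 : l ≠ 0) (h1 : l ≠ 1)
    (hm1 : l ≠ -1) (hε : ε = 2 ∨ ε = -2) : l + l⁻¹ - ε ≠ 0 := by
  rcases hε with rfl | rfl
  · have hl : l + l⁻¹ - 2 = (l - 1) ^ 2 / l := by field_simp; ring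
    rw [hl]
    exact div_ne_zero (pow_ne_zero 2 (sub_ne_zero.2 h1)) h0
  · have hl : l + l⁻¹ - -2 = (l + 1) ^ 2 / l := by field_simp; ring
    rw [hl]
    exact div_ne_zero (pow_ne_zero 2 (by rwa [← sub_neg_eq_add, sub_ne_zero])) h0

def parabolicMatrix (x z : K) : Matrix (Fin 2) (Fin 2) K :=
  !![1 - x, -x ^ 2 / z; z, 1 + x]

@[simp]
lemma parabolicMatrix_apply_one_zero (x z : K) : parabolicMatrix x z 1 0 = z := rfl

lemma trace_mul_diagonal_fin_two (A : Matrix (Fin 2) (Fin 2) K) (l m : K) :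
    (A * !![l, 0; 0, m]).trace = A 0 0 * l + A 1 1 * m := by
  simp [trace_fin_two, mul_apply, Fin.sum_univ_two]

section TraceConditions

variable {l ε x : K} (hl : l - l⁻¹ ≠ 0) (hx : x * (l - l⁻¹) = l + l⁻¹ - ε)
include hl hx

lemma diag_eq_of_trace_eq_two_of_trace_mul_diagonal {A : Matrix (Fin 2) (Fin 2) K}
    (htr : A.trace = 2) (htrD : (A * !![l, 0; 0, l⁻¹]).trace = ε) :
    A 0 0 = 1 - x ∧ A 1 1 = 1 + x := by
  rw [trace_fin_two] at htr
  rw [trace_mul_diagonal_fin_two] at htrD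
  have ha : (A 0 0 - (1 - x)) * (l - l⁻¹) = 0 := by
    linear_combination htrD + hx - l⁻¹ * htr
  have ha := (mul_eq_zero.1 ha).resolve_right hl
  exact ⟨by linear_combination ha, by linear_combination htr - ha⟩

theorem setOf_trace_conditions_eq_image_parabolicMatrix (hx0 : x ≠ 0) :
    {A : Matrix (Fin 2) (Fin 2) K | A.det = 1 ∧ A.trace = 2 ∧ A ≠ 1 ∧
        (A * !![l, 0; 0, l⁻¹]).trace = ε} = parabolicMatrix x '' {z | z ≠ 0} := by
  ext A
  constructor
  · rintro ⟨hdet, htr, -, htrD⟩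
    obtain ⟨ha, hd⟩ := diag_eq_of_trace_eq_two_of_trace_mul_diagonal hl hx htr htrD
    rw [det_fin_two, ha, hd] at hdet
    have hbc : A 0 1 * A 1 0 = -x ^ 2 := by linear_combination -hdet
    have hc : A 1 0 ≠ 0 := fun hc => hx0 (pow_eq_zero_iff two_ne_zero |>.1
      (neg_eq_zero.1 (by rw [← hbc, hc, mul_zero])))
    refine ⟨A 1 0, hc, ?_⟩
    ext i j
    fin_cases i <;> fin_cases j
    · exact ha.symm
    · exact (eq_div_of_mul_eq hc hbc).symm
    · rfl
    · exact hd.symm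
  · rintro ⟨z, hz : z ≠ 0, rfl⟩
    refine ⟨?_, ?_, fun h => hz (by simpa using congrFun (congrFun h 1) 0), ?_⟩
    · rw [parabolicMatrix, det_fin_two_of]
      field_simp
      ring
    · rw [parabolicMatrix, trace_fin_two_of]
      ring
    · rw [trace_mul_diagonal_fin_two]
      change (1 - x) * l + (1 + x) * l⁻¹ = ε
      linear_combination -hx

end TraceConditions

lemma bijOn_apply_one_zero_image_parabolicMatrix (x : K) :
    Set.BijOn (fun A : Matrix (Fin 2) (Fin 2) K => A 1 0) (parabolicMatrix x '' {z | z ≠ 0})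
      {z | z ≠ 0} := by
  have h : Set.LeftInvOn (fun A : Matrix (Fin 2) (Fin 2) K => A 1 0) (parabolicMatrix x)
      {z | z ≠ 0} := fun z _ => rfl
  exact h.injOn.bijOn_image.symm ⟨h.rightInvOn_image, h⟩

theorem stmt7 (lam0 : ℂ) (h0 : lam0 ≠ 0) (h1 : lam0 ≠ 1) (hm1 : lam0 ≠ -1)
    (ε : ℂ) (hε : ε = 2 ∨ ε = -2)
    (x : ℂ) (hx : x = (lam0 + lam0⁻¹ - ε) / (lam0 - lam0⁻¹)) :
    Set.BijOn (fun A : Matrix (Fin 2) (Fin 2) ℂ => A 1 0)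
      {A : Matrix (Fin 2) (Fin 2) ℂ | A.det = 1 ∧ A.trace = 2 ∧ A ≠ 1 ∧
        (A * !![lam0, 0; 0, lam0⁻¹]).trace = ε}
      {z : ℂ | z ≠ 0} ∧
    x ≠ 0 ∧
    ∀ A ∈ {A : Matrix (Fin 2) (Fin 2) ℂ | A.det = 1 ∧ A.trace = 2 ∧ A ≠ 1 ∧
        (A * !![lam0, 0; 0, lam0⁻¹]).trace = ε},
      A = !![1 - x, -x ^ 2 / (A 1 0); A 1 0, 1 + x] := by
  have hl := sub_inv_ne_zero_of_ne_one_of_ne_neg_one h0 h1 hm1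
  have hx0 : x ≠ 0 :=
    hx ▸ div_ne_zero (add_inv_sub_ne_zero_of_eq_two_or_eq_neg_two h0 h1 hm1 hε) hl
  have hxl : x * (lam0 - lam0⁻¹) = lam0 + lam0⁻¹ - ε := by rw [hx, div_mul_cancel₀ _ hl]
  rw [setOf_trace_conditions_eq_image_parabolicMatrix hl hxl hx0]
  refine ⟨bijOn_apply_one_zero_image_parabolicMatrix x, hx0, ?_⟩
  rintro _ ⟨z, -, rfl⟩
  rfl
end

section
/- Fix λ₀ ∈ ℂ∖{0,1,−1,i,−i}, set t₀ = λ₀ + λ₀⁻¹ (so t₀ ∉ {0,2,−2}), and let D_{λ₀} = [[λ₀,0],[0,λ₀⁻¹]]. Then every A ∈ SL₂(ℂ) with tr A = t₀ and tr(A·D_{λ₀}) = −2 satisfies A₁₂·A₂₁ = −4t₀²/(t₀²−4) ≠ 0, and the map A ↦ A₂₁ is a bijection from {A ∈ SL₂(ℂ) : tr A = t₀, tr(A·D_{λ₀}) = −2} onto ℂ∖{0}. -/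
/-!
The two trace conditions are linear in the diagonal entries of `A`, with determinant
`l⁻¹ - l ≠ 0`, so they pin down `A 0 0` and `A 1 1`. The determinant condition then fixes the
product of the off-diagonal entries to `-4 (l² + 1)² / (l² - 1)²`, which is nonzero because
`l² ≠ -1`. Hence `A` is determined by `A 1 0`, which may be any nonzero number.
-/

open Matrix

namespace TraceFiber

variable {K : Type*} [Field K]

def fiber (l : K) : Set (Matrix (Fin 2) (Fin 2) K) :=
  {A | A.det = 1 ∧ A.trace = l + l⁻¹ ∧ (A * !![l, 0; 0, l⁻¹]).trace = -2}

def offDiagProduct (l : K) : K := -4 * (l ^ 2 + 1) ^ 2 / (l ^ 2 - 1) ^ 2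

def ofLowerLeft (l z : K) : Matrix (Fin 2) (Fin 2) K :=
  !![-(3 * l ^ 2 + 1) / (l * (l ^ 2 - 1)), offDiagProduct l / z;
     z, l * (l ^ 2 + 3) / (l ^ 2 - 1)]

lemma trace_mul_diagonal_fin_two (A : Matrix (Fin 2) (Fin 2) K) (a b : K) :
    (A * !![a, 0; 0, b]).trace = A 0 0 * a + A 1 1 * b := by
  simp [trace_fin_two, mul_apply, Fin.sum_univ_two]

lemma offDiagProduct_eq (l : K) (hl : l ≠ 0) :
    offDiagProduct l = -4 * (l + l⁻¹) ^ 2 / ((l + l⁻¹) ^ 2 - 4) := by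
  have hsum : (l + l⁻¹) ^ 2 = (l ^ 2 + 1) ^ 2 / l ^ 2 := by field_simp
  have hdiff : (l + l⁻¹) ^ 2 - 4 = (l ^ 2 - 1) ^ 2 / l ^ 2 := by field_simp; ring
  rw [offDiagProduct, hdiff, hsum, mul_div_assoc', div_div_div_cancel_right₀ (pow_ne_zero 2 hl)]

lemma offDiagProduct_ne_zero [NeZero (2 : K)] {l : K} (hl1 : l ^ 2 ≠ 1) (hl2 : l ^ 2 ≠ -1) :
    offDiagProduct l ≠ 0 := by
  have h4 : (-4 : K) ≠ 0 := by
    simpa [show (-4 : K) = -(2 * 2) by norm_num] using NeZero.ne (2 : K)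
  refine div_ne_zero (mul_ne_zero h4 (pow_ne_zero 2 ?_)) (pow_ne_zero 2 (sub_ne_zero.mpr hl1))
  exact fun h => hl2 (eq_neg_of_add_eq_zero_left h)

variable {l : K}

lemma diag_eq_of_mem_fiber (hl0 : l ≠ 0) (hl1 : l ^ 2 ≠ 1) {A : Matrix (Fin 2) (Fin 2) K}
    (hA : A ∈ fiber l) :
    A 0 0 = -(3 * l ^ 2 + 1) / (l * (l ^ 2 - 1)) ∧ A 1 1 = l * (l ^ 2 + 3) / (l ^ 2 - 1) := by
  obtain ⟨-, htr, htrD⟩ := hA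
  rw [trace_fin_two] at htr
  rw [trace_mul_diagonal_fin_two] at htrD
  have hl1' : l ^ 2 - 1 ≠ 0 := sub_ne_zero.mpr hl1
  have h00 : A 0 0 = -(3 * l ^ 2 + 1) / (l * (l ^ 2 - 1)) := by
    field_simp at htr htrD ⊢
    linear_combination l * htrD - htr
  refine ⟨h00, ?_⟩
  rw [eq_sub_of_add_eq' htr, h00]
  field_simp
  ring

lemma mul_offDiag_of_mem_fiber (hl0 : l ≠ 0) (hl1 : l ^ 2 ≠ 1) {A : Matrix (Fin 2) (Fin 2) K}
    (hA : A ∈ fiber l) : A 0 1 * A 1 0 = offDiagProduct l := by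
  obtain ⟨h00, h11⟩ := diag_eq_of_mem_fiber hl0 hl1 hA
  have hdet := hA.1
  rw [det_fin_two, h00, h11] at hdet
  have hl1' : l ^ 2 - 1 ≠ 0 := sub_ne_zero.mpr hl1
  rw [offDiagProduct]
  field_simp at hdet ⊢
  linear_combination -hdet

lemma ofLowerLeft_mem_fiber (hl0 : l ≠ 0) (hl1 : l ^ 2 ≠ 1) {z : K} (hz : z ≠ 0) :
    ofLowerLeft l z ∈ fiber l := by
  have hl1' : l ^ 2 - 1 ≠ 0 := sub_ne_zero.mpr hl1
  refine ⟨?_, ?_, ?_⟩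
  · rw [ofLowerLeft, det_fin_two_of, offDiagProduct]
    field_simp
    ring
  · rw [ofLowerLeft, trace_fin_two_of]
    field_simp
    ring
  · rw [trace_mul_diagonal_fin_two]
    simp only [ofLowerLeft, of_apply, cons_val', cons_val_zero, cons_val_one, empty_val',
      cons_val_fin_one]
    field_simp
    ring

lemma ofLowerLeft_apply_self_of_mem_fiber (hl0 : l ≠ 0) (hl1 : l ^ 2 ≠ 1)
    {A : Matrix (Fin 2) (Fin 2) K} (hA : A ∈ fiber l) (h10 : A 1 0 ≠ 0) :
    ofLowerLeft l (A 1 0) = A := by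
  obtain ⟨h00, h11⟩ := diag_eq_of_mem_fiber hl0 hl1 hA
  have h01 : A 0 1 = offDiagProduct l / A 1 0 :=
    eq_div_of_mul_eq h10 (mul_offDiag_of_mem_fiber hl0 hl1 hA)
  rw [eta_fin_two A, ofLowerLeft, h00, h11, h01]
  simp

lemma lowerLeft_ne_zero_of_mem_fiber [NeZero (2 : K)] (hl0 : l ≠ 0) (hl1 : l ^ 2 ≠ 1)
    (hl2 : l ^ 2 ≠ -1) {A : Matrix (Fin 2) (Fin 2) K} (hA : A ∈ fiber l) : A 1 0 ≠ 0 :=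
  right_ne_zero_of_mul (mul_offDiag_of_mem_fiber hl0 hl1 hA ▸ offDiagProduct_ne_zero hl1 hl2)

lemma bijOn_lowerLeft [NeZero (2 : K)] (hl0 : l ≠ 0) (hl1 : l ^ 2 ≠ 1) (hl2 : l ^ 2 ≠ -1) :
    Set.BijOn (fun A : Matrix (Fin 2) (Fin 2) K => A 1 0) (fiber l) {z | z ≠ 0} := by
  have hmaps : Set.MapsTo (fun A : Matrix (Fin 2) (Fin 2) K => A 1 0) (fiber l) {z | z ≠ 0} :=
    fun A hA => lowerLeft_ne_zero_of_mem_fiber hl0 hl1 hl2 hA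
  refine Set.InvOn.bijOn ⟨fun A hA => ?_, fun z _ => by simp [ofLowerLeft]⟩ hmaps
    fun z hz => ofLowerLeft_mem_fiber hl0 hl1 hz
  exact ofLowerLeft_apply_self_of_mem_fiber hl0 hl1 hA (hmaps hA)

end TraceFiber

open TraceFiber in
theorem stmt8 (lam0 : ℂ) (h0 : lam0 ≠ 0) (h1 : lam0 ≠ 1) (hm1 : lam0 ≠ -1)
    (hI : lam0 ≠ Complex.I) (hmI : lam0 ≠ -Complex.I)
    (t0 : ℂ) (ht0 : t0 = lam0 + lam0⁻¹) :
    (∀ A : Matrix (Fin 2) (Fin 2) ℂ,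
      A.det = 1 → A.trace = t0 → (A * !![lam0, 0; 0, lam0⁻¹]).trace = -2 →
      A 0 1 * A 1 0 = -4 * t0 ^ 2 / (t0 ^ 2 - 4)) ∧
    (-4 * t0 ^ 2 / (t0 ^ 2 - 4) ≠ 0) ∧
    Set.BijOn (fun A : Matrix (Fin 2) (Fin 2) ℂ => A 1 0)
      {A : Matrix (Fin 2) (Fin 2) ℂ | A.det = 1 ∧ A.trace = t0 ∧
        (A * !![lam0, 0; 0, lam0⁻¹]).trace = -2}
      {z : ℂ | z ≠ 0} := by
  subst ht0
  have hsq1 : lam0 ^ 2 ≠ 1 := by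
    rw [Ne, sq_eq_one_iff]
    exact not_or_intro h1 hm1
  have hsqm1 : lam0 ^ 2 ≠ -1 := by
    rw [Ne, ← Complex.I_sq, sq_eq_sq_iff_eq_or_eq_neg]
    exact not_or_intro hI hmI
  rw [← offDiagProduct_eq lam0 h0]
  exact ⟨fun A hdet htr htrD => mul_offDiag_of_mem_fiber h0 hsq1 ⟨hdet, htr, htrD⟩,
    offDiagProduct_ne_zero hsq1 hsqm1, bijOn_lowerLeft h0 hsq1 hsqm1⟩
end

section
/- Fix λ₀ ∈ ℂ∖{0,1,−1} and set t₀ = λ₀ + λ₀⁻¹. For every λ ∈ ℂ∖{0}, letting t = λ + λ⁻¹, the set of solutions t' ∈ ℂ of the equation (t−t')²/(t₀²−4) − t t'/(t₀+2) = −1 is exactly {λ₀λ + λ₀⁻¹λ⁻¹, λ₀λ⁻¹ + λ₀⁻¹λ}. -/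
/-!
Clearing denominators, the equation becomes `t'² - t₀ t t' + (t² + t₀² - 4) = 0`, a quadratic in `t'`
(the Fricke trace relation of `SL₂`). Writing `t = λ + λ⁻¹` and `t₀ = λ₀ + λ₀⁻¹`, its two roots
`λ₀λ + λ₀⁻¹λ⁻¹` and `λ₀λ⁻¹ + λ₀⁻¹λ` have sum `t₀ t` and product `λ₀² + λ₀⁻² + λ² + λ⁻² = t² + t₀² - 4`.
The denominators are nonzero because `t₀² - 4 = (λ₀ - λ₀⁻¹)²` and `λ₀ ≠ 0, ±1`.
-/

section Field

variable {K : Type*} [Field K]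

theorem sq_add_inv_sub_four {a : K} (ha : a ≠ 0) : (a + a⁻¹) ^ 2 - 4 = (a - a⁻¹) ^ 2 := by
  linear_combination 4 * mul_inv_cancel₀ ha

theorem sub_inv_ne_zero {a : K} (ha : a ≠ 0) (h1 : a ≠ 1) (hm1 : a ≠ -1) : a - a⁻¹ ≠ 0 := by
  intro h
  have hsq : (a - 1) * (a + 1) = 0 := by linear_combination a * h + mul_inv_cancel₀ ha
  rcases mul_eq_zero.mp hsq with h' | h'
  · exact h1 (sub_eq_zero.mp h')
  · exact hm1 (eq_neg_of_add_eq_zero_left h')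

theorem trace_equation_iff {t t₀ x : K} (hD : t₀ ^ 2 - 4 ≠ 0) :
    (t - x) ^ 2 / (t₀ ^ 2 - 4) - t * x / (t₀ + 2) = -1 ↔
      x ^ 2 - t₀ * t * x + (t ^ 2 + t₀ ^ 2 - 4) = 0 := by
  have h2 : t₀ + 2 ≠ 0 := fun h => hD (by linear_combination (t₀ - 2) * h)
  have hsum : (t - x) ^ 2 / (t₀ ^ 2 - 4) - t * x / (t₀ + 2) + 1 =
      (x ^ 2 - t₀ * t * x + (t ^ 2 + t₀ ^ 2 - 4)) / (t₀ ^ 2 - 4) := by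
    field_simp
    ring
  rw [← add_eq_zero_iff_eq_neg, hsum, div_eq_zero_iff, or_iff_left hD]

theorem trace_quadratic_add_inv_eq_mul {a b : K} (ha : a ≠ 0) (hb : b ≠ 0) (x : K) :
    x ^ 2 - (a + a⁻¹) * (b + b⁻¹) * x + ((b + b⁻¹) ^ 2 + (a + a⁻¹) ^ 2 - 4) =
      (x - (a * b + a⁻¹ * b⁻¹)) * (x - (a * b⁻¹ + a⁻¹ * b)) := by
  field_simp
  ring

end Field

theorem stmt10 (lam0 : ℂ) (h0 : lam0 ≠ 0) (h1 : lam0 ≠ 1) (hm1 : lam0 ≠ -1)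
    (t0 : ℂ) (ht0 : t0 = lam0 + lam0⁻¹) :
    ∀ lam : ℂ, lam ≠ 0 →
      {t' : ℂ | ((lam + lam⁻¹) - t') ^ 2 / (t0 ^ 2 - 4)
          - (lam + lam⁻¹) * t' / (t0 + 2) = -1}
        = {lam0 * lam + lam0⁻¹ * lam⁻¹, lam0 * lam⁻¹ + lam0⁻¹ * lam} := by
  intro lam hlam
  have hD : t0 ^ 2 - 4 ≠ 0 := by
    rw [ht0, sq_add_inv_sub_four h0]
    exact pow_ne_zero 2 (sub_inv_ne_zero h0 h1 hm1)
  ext x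
  simp only [Set.mem_ofPred_eq, Set.mem_insert_iff, Set.mem_singleton_iff]
  rw [trace_equation_iff hD, ht0, trace_quadratic_add_inv_eq_mul h0 hlam, mul_eq_zero,
    sub_eq_zero, sub_eq_zero]
end

section
/- Let g, s ≥ 0 be integers, μᵢ, νᵢ ∈ ℂ∖{0} and aᵢ, bᵢ ∈ ℂ for 1 ≤ i ≤ g, and λₖ ∈ ℂ∖{0}, cₖ ∈ ℂ for 1 ≤ k ≤ s. Set Aᵢ = [[μᵢ, aᵢ],[0, μᵢ⁻¹]], Bᵢ = [[νᵢ, bᵢ],[0, νᵢ⁻¹]], Cₖ = [[λₖ, cₖ],[0, λₖ⁻¹]] in SL₂(ℂ). Then ∏_{i=1}^{g} (AᵢBᵢAᵢ⁻¹Bᵢ⁻¹) · ∏_{k=1}^{s} Cₖ equals the identity matrix if and only if λ₁⋯λₛ = 1 and ∑_{i=1}^{g} μᵢνᵢ·((μᵢ−μᵢ⁻¹)bᵢ − (νᵢ−νᵢ⁻¹)aᵢ) + ∑_{k=1}^{s} (∏_{j<k} λⱼ)·(∏_{j>k} λⱼ)⁻¹·cₖ = 0. -/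
open Matrix

lemma tri_inv (m a : ℂ) (hm : m ≠ 0) :
    (!![m, a; 0, m⁻¹])⁻¹ = !![m⁻¹, -a; 0, m] := by
  apply Matrix.inv_eq_left_inv
  rw [Matrix.mul_fin_two, Matrix.one_fin_two]
  congr 1 <;> field_simp <;> simp

lemma tri_prod (n : ℕ) (d e : Fin n → ℂ) :
    (List.ofFn (fun k => !![d k, e k; 0, (d k)⁻¹])).prod =
      !![∏ k, d k,
         ∑ k, (∏ j ∈ Finset.univ.filter (fun j => j < k), d j) *
              (∏ j ∈ Finset.univ.filter (fun j => k < j), d j)⁻¹ * e k;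
         0, (∏ k, d k)⁻¹] := by
  induction n with
  | zero => simp [Matrix.one_fin_two]
  | succ n ih =>
    rw [List.ofFn_succ, List.prod_cons, ih (fun k => d k.succ) (fun k => e k.succ)]
    rw [Matrix.mul_fin_two]
    simp only [Finset.prod_filter, Finset.sum_filter, Fin.prod_univ_succ, Fin.sum_univ_succ,
      Fin.succ_lt_succ_iff, Fin.succ_pos, Fin.not_lt_zero, Fin.pos_iff_ne_zero,
      Fin.succ_ne_zero, if_false, if_true, ne_eq, not_false_eq_true]
    ext i j
    fin_cases i <;> fin_cases j <;>
      simp [Finset.mul_sum]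
    · rw [add_comm]
      congr 1
      · ring
      · exact Finset.sum_congr rfl fun x _ => by ring
    · ring

theorem stmt12 (g s : ℕ) (mu nu a b : Fin g → ℂ) (lam c : Fin s → ℂ)
    (hmu : ∀ i, mu i ≠ 0) (hnu : ∀ i, nu i ≠ 0) (hlam : ∀ k, lam k ≠ 0)
    (A B : Fin g → Matrix (Fin 2) (Fin 2) ℂ) (C : Fin s → Matrix (Fin 2) (Fin 2) ℂ)
    (hA : ∀ i, A i = !![mu i, a i; 0, (mu i)⁻¹])
    (hB : ∀ i, B i = !![nu i, b i; 0, (nu i)⁻¹])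
    (hC : ∀ k, C k = !![lam k, c k; 0, (lam k)⁻¹]) :
    (List.ofFn (fun i => A i * B i * (A i)⁻¹ * (B i)⁻¹)).prod *
        (List.ofFn fun k => C k).prod = 1 ↔
      (∏ k, lam k) = 1 ∧
        (∑ i, mu i * nu i * ((mu i - (mu i)⁻¹) * b i - (nu i - (nu i)⁻¹) * a i)) +
          (∑ k, (∏ j ∈ Finset.univ.filter (fun j => j < k), lam j) *
            (∏ j ∈ Finset.univ.filter (fun j => k < j), lam j)⁻¹ * c k) = 0 := by
  set t : Fin g → ℂ :=
    fun i => mu i * nu i * ((mu i - (mu i)⁻¹) * b i - (nu i - (nu i)⁻¹) * a i) with ht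
  have hcomm : (fun i => A i * B i * (A i)⁻¹ * (B i)⁻¹)
      = fun i => !![(1:ℂ), t i; 0, ((1:ℂ))⁻¹] := by
    funext i
    rw [hA, hB, tri_inv _ _ (hmu i), tri_inv _ _ (hnu i)]
    rw [Matrix.mul_fin_two, Matrix.mul_fin_two, Matrix.mul_fin_two]
    ext i j
    fin_cases i <;> fin_cases j <;> simp <;> field_simp [hmu i, hnu i] <;>
      linear_combination (nu i * b i) * mul_inv_cancel₀ (hmu i) -
        (mu i * a i) * mul_inv_cancel₀ (hnu i)
  have hCfun : (fun k => C k) = fun k => !![lam k, c k; 0, (lam k)⁻¹] := funext hC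
  rw [hcomm, hCfun, tri_prod g (fun _ => (1:ℂ)) t, tri_prod s lam c]
  simp only [Finset.prod_const_one, inv_one, one_mul, mul_one]
  rw [Matrix.mul_fin_two]
  set S := ∑ i, t i
  set T := ∑ k, (∏ j ∈ Finset.univ.filter (fun j => j < k), lam j) *
            (∏ j ∈ Finset.univ.filter (fun j => k < j), lam j)⁻¹ * c k
  set Λ := ∏ k, lam k
  constructor
  · intro h
    have h00 := congrFun (congrFun h 0) 0
    have h01 := congrFun (congrFun h 0) 1
    simp [Matrix.one_fin_two] at h00 h01
    refine ⟨h00, ?_⟩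
    rw [h00] at h01
    simp at h01
    linear_combination h01
  · rintro ⟨hΛ, hsum⟩
    rw [hΛ]
    ext i j
    fin_cases i <;> fin_cases j <;> simp [Matrix.one_fin_two] <;> linear_combination hsum
end
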